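/- Let Σ be an alphabet, let x, y be strings over Σ of length n, and let p ∈ [0,1]. Let U ⊆ [n] be a random subset in which each index i ∈ [n] is included independently with probability p, and let x_U (respectively y_U) denote the subsequence of x (respectively y) obtained by keeping exactly the positions in U, in increasing order. Then E[LCS(x_U, y_U)] ≥ p² · LCS(x, y). -/

import Mathlib

/-- `LCS x y` is the maximal length of a common subsequence of the strings `x` and `y`. -/
noncomputable def LCS {α : Type*} (x y : List α) : ℕ :=
  sSup {k | ∃ s : List α, s.Sublist x ∧ s.Sublist y ∧ s.length = k}

/-- `restrict x U` is the string obtained from `x` by keeping exactly the letters whose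
positions lie in `U`, in increasing order of position. -/
def restrict {α : Type*} (x : List α) (U : Finset ℕ) : List α :=
  ((x.zipIdx.map Prod.swap).filter (fun p => decide (p.1 ∈ U))).map Prod.snd

/-! Match a longest common subsequence of `x` and `y` at positions `i₁ < ⋯ < i_k` of `x` and
`j₁ < ⋯ < j_k` of `y`. For every `U`, the matched pairs with `i_t, j_t ∈ U` still spell a common
subsequence of `x_U` and `y_U`, so `LCS(x_U, y_U)` is at least their number. By linearity of
expectation this number has mean `∑_t P(i_t, j_t ∈ U) = ∑_t p ^ |{i_t, j_t}| ≥ k p²`. -/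

open Finset
open scoped List

theorem sum_powerset_mul_ite_subset {ι R : Type*} [DecidableEq ι] [CommRing R]
    {s T : Finset ι} (hT : T ⊆ s) (p : R) :
    ∑ U ∈ s.powerset, p ^ #U * (1 - p) ^ (#s - #U) * (if T ⊆ U then 1 else 0) = p ^ #T := by
  -- Expand `∏ i ∈ s, (p + [i ∉ T] (1 - p))`, `U` being the set of factors where `p` is chosen.
  have hL : ∏ i ∈ s, (p + if i ∉ T then 1 - p else 0) = p ^ #T := by
    rw [← prod_const, ← inter_eq_right.mpr hT, ← prod_ite_mem]
    exact prod_congr rfl fun i _ => by split_ifs <;> simp_all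
  rw [← hL, prod_add]
  refine sum_congr rfl fun U hU => ?_
  rw [mem_powerset] at hU
  have hsub : (∀ i ∈ s \ U, i ∉ T) ↔ T ⊆ U := by
    refine ⟨fun h i hi => ?_, fun h i hi hiT => (mem_sdiff.mp hi).2 (h hiT)⟩
    by_contra hiU
    exact h i (mem_sdiff.mpr ⟨hT hi, hiU⟩) hi
  rw [prod_const, prod_ite_zero, prod_const, card_sdiff_of_subset hU]
  simp only [hsub, mul_ite, mul_one, mul_zero]

theorem sq_le_sum_powerset_mul_ite_mem_and_mem {ι R : Type*} [DecidableEq ι] [CommRing R]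
    [PartialOrder R] [IsOrderedRing R] {s : Finset ι} {a b : ι} (ha : a ∈ s) (hb : b ∈ s)
    {p : R} (hp0 : 0 ≤ p) (hp1 : p ≤ 1) :
    p ^ 2 ≤ ∑ U ∈ s.powerset, p ^ #U * (1 - p) ^ (#s - #U) * (if a ∈ U ∧ b ∈ U then 1 else 0) := by
  have h := sum_powerset_mul_ite_subset (insert_subset ha (singleton_subset_iff.mpr hb)) p
  simp only [insert_subset_iff, singleton_subset_iff] at h
  rw [h]
  exact pow_le_pow_of_le_one hp0 hp1 card_le_two

section LCS

variable {α : Type*}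

theorem bddAbove_lengths_common_sublist (x y : List α) :
    BddAbove {k | ∃ s : List α, s <+ x ∧ s <+ y ∧ s.length = k} := by
  refine ⟨x.length, ?_⟩
  rintro k ⟨s, hsx, -, rfl⟩
  exact hsx.length_le

theorem length_le_LCS {s x y : List α} (hsx : s <+ x) (hsy : s <+ y) : s.length ≤ LCS x y :=
  le_csSup (bddAbove_lengths_common_sublist x y) ⟨s, hsx, hsy, rfl⟩

theorem exists_common_sublist_length_eq_LCS (x y : List α) :
    ∃ s : List α, s <+ x ∧ s <+ y ∧ s.length = LCS x y :=
  Nat.sSup_mem (s := {k | ∃ s : List α, s <+ x ∧ s <+ y ∧ s.length = k})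
    ⟨0, [], List.nil_sublist x, List.nil_sublist y, rfl⟩ (bddAbove_lengths_common_sublist x y)

theorem map_get_sublist_restrict {x : List α} {U : Finset ℕ} {is : List (Fin x.length)}
    (his : is.Pairwise (· < ·)) (hU : ∀ i ∈ is, (i : ℕ) ∈ U) :
    is.map x.get <+ restrict x U := by
  have hlen : (x.zipIdx.map Prod.swap).length = x.length := by simp
  have hsub := List.map_getElem_sublist (l := x.zipIdx.map Prod.swap)
    (is := is.map (Fin.cast hlen.symm)) (by simpa [List.pairwise_map] using his)
  set pairs := is.map fun i : Fin x.length => ((i : ℕ), x.get i)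
  have hpairs : (is.map (Fin.cast hlen.symm)).map ((x.zipIdx.map Prod.swap)[·]) = pairs := by
    simp [pairs]
  have hkept : pairs.filter (fun q => decide (q.1 ∈ U)) = pairs :=
    List.filter_eq_self.mpr (by simpa [pairs] using hU)
  rw [hpairs] at hsub
  have h := (hsub.filter fun q => decide (q.1 ∈ U)).map Prod.snd
  rw [hkept, List.map_map] at h
  exact h

theorem map_get_sublist_restrict_of_embedding {s x : List α} (f : Fin s.length ↪o Fin x.length)
    (hf : ∀ t, s.get t = x.get (f t)) {U : Finset ℕ} {T : List (Fin s.length)}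
    (hT : T.Pairwise (· < ·)) (hU : ∀ t ∈ T, (f t : ℕ) ∈ U) :
    T.map s.get <+ restrict x U := by
  have hcomp : T.map s.get = (T.map f).map x.get := by
    rw [List.map_map]
    exact List.map_congr_left fun t _ => hf t
  rw [hcomp]
  exact map_get_sublist_restrict (hT.map f fun _ _ h => f.strictMono h) (by simpa using hU)

theorem card_filter_le_LCS_restrict {s x y : List α}
    (f : Fin s.length ↪o Fin x.length) (g : Fin s.length ↪o Fin y.length)
    (hf : ∀ t, s.get t = x.get (f t)) (hg : ∀ t, s.get t = y.get (g t)) (U : Finset ℕ) :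
    #{t | (f t : ℕ) ∈ U ∧ (g t : ℕ) ∈ U} ≤ LCS (restrict x U) (restrict y U) := by
  set T := sort {t | (f t : ℕ) ∈ U ∧ (g t : ℕ) ∈ U}
  have hT : T.Pairwise (· < ·) := (sortedLT_sort _).pairwise
  have hmem : ∀ t ∈ T, (f t : ℕ) ∈ U ∧ (g t : ℕ) ∈ U := fun t ht =>
    (mem_filter.mp ((mem_sort _).mp ht)).2
  have hx := map_get_sublist_restrict_of_embedding f hf hT fun t ht => (hmem t ht).1
  have hy := map_get_sublist_restrict_of_embedding g hg hT fun t ht => (hmem t ht).2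
  simpa [T] using length_le_LCS hx hy

end LCS

/-- If each index in `[n]` is kept independently with probability `p`, then the expected
LCS of the restricted strings satisfies `E[LCS(x_U, y_U)] ≥ p² · LCS(x, y)`.  The
expectation is written explicitly as a sum over all subsets `U ⊆ [n]`, weighted by the
Bernoulli product probability `p^|U| (1-p)^(n-|U|)`. -/
theorem expected_LCS_restrict_ge {α : Type*}
    (n : ℕ) (x y : List α) (hx : x.length = n) (hy : y.length = n)
    (p : ℝ) (hp0 : 0 ≤ p) (hp1 : p ≤ 1) :
    p ^ 2 * (LCS x y : ℝ) ≤
      ∑ U ∈ (Finset.range n).powerset,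
        p ^ U.card * (1 - p) ^ (n - U.card) * (LCS (restrict x U) (restrict y U) : ℝ) := by
  obtain ⟨s, hsx, hsy, hs⟩ := exists_common_sublist_length_eq_LCS x y
  obtain ⟨f, hf⟩ := List.sublist_iff_exists_fin_orderEmbedding_get_eq.mp hsx
  obtain ⟨g, hg⟩ := List.sublist_iff_exists_fin_orderEmbedding_get_eq.mp hsy
  set w : Finset ℕ → ℝ := fun U => p ^ #U * (1 - p) ^ (n - #U)
  have hw : ∀ U, 0 ≤ w U := fun U => by have := sub_nonneg.mpr hp1; positivity
  have hn : #(range n) = n := card_range n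
  calc p ^ 2 * (LCS x y : ℝ) = ∑ _t : Fin s.length, p ^ 2 := by simp [hs, mul_comm]
    _ ≤ ∑ t : Fin s.length, ∑ U ∈ (range n).powerset,
          w U * if (f t : ℕ) ∈ U ∧ (g t : ℕ) ∈ U then 1 else 0 := by
        refine sum_le_sum fun t _ => ?_
        have h := sq_le_sum_powerset_mul_ite_mem_and_mem
          (mem_range.mpr ((f t).isLt.trans_eq hx)) (mem_range.mpr ((g t).isLt.trans_eq hy)) hp0 hp1
        rwa [hn] at h
    _ = ∑ U ∈ (range n).powerset, w U * #{t | (f t : ℕ) ∈ U ∧ (g t : ℕ) ∈ U} := by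
        simp only [card_filter, Nat.cast_sum, Nat.cast_ite, Nat.cast_one, Nat.cast_zero, mul_sum]
        exact sum_comm
    _ ≤ ∑ U ∈ (range n).powerset, w U * (LCS (restrict x U) (restrict y U) : ℝ) := by
        refine sum_le_sum fun U _ => mul_le_mul_of_nonneg_left ?_ (hw U)
        exact_mod_cast card_filter_le_LCS_restrict f g hf hg U
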